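/- arXiv:1308.3529 — 2 statements merged into one kernel-verified Lean document; each statement's English description precedes it below -/
import Mathlib

section
/- Fix J ⊆ I_0. If w ∈ W_0^J and β ∈ Δ_0^+ ∖ Δ_J^+ satisfy ℓ(⌊wr_β⌋) = ℓ(w) + 1, then wr_β ∈ W_0^J (so that ⌊wr_β⌋ = wr_β). -/
noncomputable section

open Classical

/-! ## Generic path and root-operator machinery -/

/-- The unit interval `[0,1] ⊆ ℝ`, the common domain of all paths. -/
abbrev UnitItv : Type := Set.Icc (0 : ℝ) 1

/-- Clamp a real number into `[0,1]`. -/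
def clamp (r : ℝ) : UnitItv := Set.projIcc 0 1 zero_le_one r

/-- The point `0 ∈ [0,1]`. -/
def pt0 : UnitItv := ⟨0, by norm_num⟩

/-- The point `1 ∈ [0,1]`. -/
def pt1 : UnitItv := ⟨1, by norm_num⟩

section RootOps

variable {V : Type*} [AddCommGroup V] [Module ℝ V]

/-- `mval co η` is `m^η = min{ co(η(t)) : t ∈ [0,1] }`. -/
def mval (co : V → ℝ) (η : UnitItv → V) : ℝ :=
  sInf (Set.range fun t : UnitItv => co (η t))

/-- All local minima of the function `t ↦ co (η t)` on `[0,1]` are integers. -/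
def IntLocMin (co : V → ℝ) (η : UnitItv → V) : Prop :=
  ∀ r ∈ Set.Icc (0:ℝ) 1,
    IsLocalMinOn (fun u : ℝ => co (η (clamp u))) (Set.Icc (0:ℝ) 1) r →
      ∃ n : ℤ, co (η (clamp r)) = (n : ℝ)

/-- `η` is piecewise linear on `[0,1]`. -/
def IsPL (η : UnitItv → V) : Prop :=
  ∃ (s : ℕ) (σ : ℕ → ℝ) (v : ℕ → V), 1 ≤ s ∧ σ 0 = 0 ∧ σ s = 1 ∧
    (∀ k < s, σ k < σ (k+1)) ∧
    ∀ k, 1 ≤ k → k ≤ s → ∀ t : UnitItv, σ (k-1) ≤ (t:ℝ) → (t:ℝ) ≤ σ k →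
      η t = η (clamp (σ (k-1))) + ((t:ℝ) - σ (k-1)) • v k

/-- `η` is a path with weight in the lattice `Pcl`: a piecewise-linear
continuous map with `η(0) = 0` and `η(1) ∈ Pcl`. -/
def IsPath (Pcl : AddSubgroup V) (η : UnitItv → V) : Prop :=
  η pt0 = 0 ∧ η pt1 ∈ Pcl ∧ IsPL η

/-- The reflection `v ↦ v − ⟨v, a^∨⟩ a`, where `co = ⟨·, a^∨⟩`. -/
def reflBy (co : V → ℝ) (a : V) (v : V) : V := v - co v • a

/-- `t₀ = max{ t ∈ [0,1] : H(t) = m }` in the definition of `f_j`. -/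
def fT0 (co : V → ℝ) (η : UnitItv → V) : ℝ :=
  sSup {r : ℝ | r ∈ Set.Icc (0:ℝ) 1 ∧ co (η (clamp r)) = mval co η}

/-- `t₁ = min{ t ∈ [t₀,1] : H(t) = m + 1 }` in the definition of `f_j`. -/
def fT1 (co : V → ℝ) (η : UnitItv → V) : ℝ :=
  sInf {r : ℝ | r ∈ Set.Icc (fT0 co η) 1 ∧ co (η (clamp r)) = mval co η + 1}

/-- The path `f_j η` (in the non-vanishing case). -/
def fRaw (co : V → ℝ) (a : V) (η : UnitItv → V) : UnitItv → V := fun t =>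
  if (t:ℝ) ≤ fT0 co η then η t
  else if (t:ℝ) ≤ fT1 co η then
    η (clamp (fT0 co η)) + reflBy co a (η t - η (clamp (fT0 co η)))
  else η t - a

/-- The root operator `f_j` (with `co = ⟨·, α_j^∨⟩`, `a = α_j`), acting on
paths together with the extra element `0` (encoded by `Option`, `none = 0`). -/
def fOp (co : V → ℝ) (a : V) : Option (UnitItv → V) → Option (UnitItv → V) :=
  fun o => o.bind fun η =>
    if co (η pt1) - mval co η = 0 then none else some (fRaw co a η)

/-- `t₁ = min{ t ∈ [0,1] : H(t) = m }` in the definition of `e_j`. -/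
def eT1 (co : V → ℝ) (η : UnitItv → V) : ℝ :=
  sInf {r : ℝ | r ∈ Set.Icc (0:ℝ) 1 ∧ co (η (clamp r)) = mval co η}

/-- `t₀ = max{ t ∈ [0,t₁] : H(t) = m + 1 }` in the definition of `e_j`. -/
def eT0 (co : V → ℝ) (η : UnitItv → V) : ℝ :=
  sSup {r : ℝ | r ∈ Set.Icc (0:ℝ) (eT1 co η) ∧ co (η (clamp r)) = mval co η + 1}

/-- The path `e_j η` (in the non-vanishing case). -/
def eRaw (co : V → ℝ) (a : V) (η : UnitItv → V) : UnitItv → V := fun t =>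
  if (t:ℝ) ≤ eT0 co η then η t
  else if (t:ℝ) ≤ eT1 co η then
    η (clamp (eT0 co η)) + reflBy co a (η t - η (clamp (eT0 co η)))
  else η t + a

/-- The root operator `e_j` (with `co = ⟨·, α_j^∨⟩`, `a = α_j`). -/
def eOp (co : V → ℝ) (a : V) : Option (UnitItv → V) → Option (UnitItv → V) :=
  fun o => o.bind fun η =>
    if mval co η = 0 then none else some (eRaw co a η)

/-- `ε_j(η) = max{ n ≥ 0 : e_j^n η ≠ 0 }`. -/
def epsV (co : V → ℝ) (a : V) (η : UnitItv → V) : ℕ :=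
  sSup {n : ℕ | (eOp co a)^[n] (some η) ≠ none}

/-- `φ_j(η) = max{ n ≥ 0 : f_j^n η ≠ 0 }`. -/
def phiV (co : V → ℝ) (a : V) (η : UnitItv → V) : ℕ :=
  sSup {n : ℕ | (fOp co a)^[n] (some η) ≠ none}

/-- The concatenation `η_1 * η_2 * ⋯ * η_n` of the paths `η 1, …, η n`. -/
def catN (n : ℕ) (η : ℕ → (UnitItv → V)) : UnitItv → V :=
  fun t => ∑ l ∈ Finset.Icc 1 n, η l (clamp (n * (t:ℝ) - l + 1))

/-- The set `B^{*n}` of `n`-fold concatenations of elements of `B`. -/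
def catSet (B : Set (UnitItv → V)) (n : ℕ) : Set (UnitItv → V) :=
  {g | ∃ η : ℕ → (UnitItv → V), (∀ l, 1 ≤ l → l ≤ n → η l ∈ B) ∧ g = catN n η}

end RootOps
/-! ## The finite Weyl group, root system and parabolic quantum Bruhat graph -/

/-- Data of the finite Weyl group `W_0` (as a Coxeter system), acting on the
classical weight space `V`, together with its finite crystallographic root
system `Δ_0` with positive roots, highest root `θ`, the reflections `r_β`,
the pairing `pair μ β = ⟨μ, β^∨⟩`, the level-zero dominant weight
`Λ = cl(λ)`, and the lattice `P_cl`. -/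
structure QBGSetting where
  I0 : Type
  [finI0 : Fintype I0]
  M : CoxeterMatrix I0
  W : Type
  [grpW : Group W]
  /-- `W` with its simple reflections `r_j`, `j ∈ I_0`, is a Coxeter system -/
  cs : CoxeterSystem M W
  V : Type
  [acgV : AddCommGroup V]
  [modV : Module ℝ V]
  /-- the action of `W_0` on `V` -/
  rep : W →* (V ≃ₗ[ℝ] V)
  /-- the simple roots -/
  α : I0 → V
  /-- `pair μ β = ⟨μ, β^∨⟩` for roots `β` -/
  pair : V →ₗ[ℝ] (V → ℝ)
  /-- `rroot β = r_β`, the reflection in the root `β` -/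
  rroot : V → W
  /-- the set of roots `Δ_0` -/
  roots : Set V
  /-- the set of positive roots `Δ_0^+` -/
  pos : Set V
  /-- the highest root of `Δ_0` -/
  θ : V
  /-- the level-zero dominant weight `Λ = cl(λ)` -/
  Λ : V
  /-- the lattice `P_cl` -/
  Pcl : AddSubgroup V
  -- axioms
  rep_faithful : Function.Injective rep
  roots_def : roots = {v : V | ∃ (w : W) (j : I0), rep w (α j) = v}
  simple_apply : ∀ (j : I0) (v : V), rep (cs.simple j) v = v - pair v (α j) • α j
  rroot_simple : ∀ j : I0, rroot (α j) = cs.simple j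
  rroot_conj : ∀ (w : W) (β : V), β ∈ roots → rroot (rep w β) = w * rroot β * w⁻¹
  rroot_apply : ∀ β ∈ roots, ∀ u : V, rep (rroot β) u = u - pair u β • β
  α_pos : ∀ j, α j ∈ pos
  pos_sub : pos ⊆ roots
  roots_pm : ∀ v ∈ roots, v ∈ pos ∨ -v ∈ pos
  pos_not_neg : ∀ v ∈ pos, -v ∉ pos
  roots_finite : roots.Finite
  pair_self : ∀ v ∈ roots, pair v v = 2
  pair_cryst : ∀ u ∈ roots, ∀ v ∈ roots, ∃ n : ℤ, pair u v = (n : ℝ)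
  pair_equivar : ∀ (w : W) (μ β : V), pair (rep w μ) (rep w β) = pair μ β
  θ_pos : θ ∈ pos
  θ_high : ∀ β ∈ pos, θ - β ∈ AddSubmonoid.closure (Set.range α)
  Λ_dom : ∀ j, 0 ≤ pair Λ (α j)
  Λ_int : ∀ j, ∃ n : ℤ, pair Λ (α j) = (n : ℝ)
  Λ_mem : Λ ∈ Pcl
  α_mem : ∀ j, α j ∈ Pcl
  pair_Pcl_int : ∀ v ∈ Pcl, ∀ β ∈ roots, ∃ n : ℤ, pair v β = (n : ℝ)

attribute [instance] QBGSetting.finI0 QBGSetting.grpW QBGSetting.acgV QBGSetting.modV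

namespace QBGSetting

variable (S : QBGSetting)

/-- The parabolic subgroup `W_J = ⟨r_j : j ∈ J⟩`. -/
def WJ (J : Set S.I0) : Subgroup S.W := Subgroup.closure (S.cs.simple '' J)

/-- The set `W_0^J` of minimal-length coset representatives for `W_0/W_J`. -/
def W0J (J : Set S.I0) : Set S.W :=
  {w | ∀ u ∈ S.WJ J, S.cs.length w ≤ S.cs.length (w * u)}

/-- The canonical projection `⌊·⌋ : W_0 → W_0^J`: the minimal-length
representative of the coset `w W_J`. -/
noncomputable def mcr (J : Set S.I0) (w : S.W) : S.W :=
  Classical.epsilon fun x => (∃ u ∈ S.WJ J, x = w * u) ∧ x ∈ S.W0J J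

/-- The lattice `⊕_{j ∈ J} ℤ α_j` (so that `Δ_J = Δ_0 ∩ ZJ`). -/
def ZJ (J : Set S.I0) : AddSubgroup S.V := AddSubgroup.closure (S.α '' J)

/-- `Q_0 = ⊕_{j ∈ I_0} ℤ α_j`. -/
def Q0 : AddSubgroup S.V := AddSubgroup.closure (Set.range S.α)

/-- `ρ = (1/2) ∑_{β ∈ Δ_0^+} β`. -/
noncomputable def ρ : S.V :=
  (2⁻¹ : ℝ) • ∑ β ∈ (S.roots_finite.subset S.pos_sub).toFinset, β

/-- `ρ_J = (1/2) ∑_{β ∈ Δ_J^+} β`. -/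
noncomputable def ρJ (J : Set S.I0) : S.V :=
  (2⁻¹ : ℝ) • ∑ β ∈ ((S.roots_finite.subset S.pos_sub).subset
    (fun _ h => h.1) (t := {β | β ∈ S.pos ∧ β ∈ S.ZJ J})).toFinset, β

/-- There is an edge `⌊w r_β⌋ ←β— w` in the parabolic quantum Bruhat graph:
`w ∈ W_0^J`, `β ∈ Δ_0^+ ∖ Δ_J^+`, and either (i) `ℓ(⌊w r_β⌋) = ℓ(w) + 1`
(Bruhat edge) or (ii) `ℓ(⌊w r_β⌋) = ℓ(w) − 2⟨ρ − ρ_J, β^∨⟩ + 1`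
(quantum edge). -/
def edge (J : Set S.I0) (w : S.W) (β : S.V) : Prop :=
  w ∈ S.W0J J ∧ β ∈ S.pos ∧ β ∉ S.ZJ J ∧
    (S.cs.length (S.mcr J (w * S.rroot β)) = S.cs.length w + 1 ∨
     (S.cs.length (S.mcr J (w * S.rroot β)) : ℝ) =
       (S.cs.length w : ℝ) - 2 * S.pair (S.ρ - S.ρJ J) β + 1)

/-- There is an edge `w' ←β— w` with `w' = ⌊w r_β⌋`. -/
def hasEdge (J : Set S.I0) (w' w : S.W) (β : S.V) : Prop :=
  S.edge J w β ∧ w' = S.mcr J (w * S.rroot β)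

/-- `w, β` (with `w k` the vertices and `β (k+1)` the labels) is a directed
path `x = w_0 ←β_1— w_1 ←β_2— ⋯ ←β_n— w_n = y` from `y` to `x` in the
parabolic quantum Bruhat graph. -/
def IsDPath (J : Set S.I0) (n : ℕ) (w : ℕ → S.W) (β : ℕ → S.V)
    (x y : S.W) : Prop :=
  w 0 = x ∧ w n = y ∧ ∀ k < n, S.hasEdge J (w k) (w (k+1)) (β (k+1))

/-- `ℓ(x ⇐ y)`: the minimal length of a directed path from `y` to `x`. -/
noncomputable def lenQ (J : Set S.I0) (x y : S.W) : ℕ :=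
  sInf {n : ℕ | ∃ w β, S.IsDPath J n w β x y}

/-- A directed `σ`-path from `y` to `x`: a directed path all of whose labels
`β_k` satisfy `σ ⟨Λ, β_k^∨⟩ ∈ ℤ`. -/
def IsDSPath (J : Set S.I0) (σ : ℝ) (n : ℕ) (w : ℕ → S.W) (β : ℕ → S.V)
    (x y : S.W) : Prop :=
  S.IsDPath J n w β x y ∧ ∀ k < n, ∃ m : ℤ, σ * S.pair S.Λ (β (k+1)) = (m : ℝ)

/-- `J = { j ∈ I_0 : ⟨Λ, α_j^∨⟩ = 0 }`. -/
def JΛ : Set S.I0 := {j | S.pair S.Λ (S.α j) = 0}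

/-- The pairing `⟨·, α_j^∨⟩` for the affine index `j ∈ I = I_0 ∪ {0}`
(`none` is the distinguished vertex `0`, and `⟨μ, α_0^∨⟩ = −⟨μ, θ^∨⟩`). -/
def acoroot : Option S.I0 → S.V → ℝ
  | some j => fun v => S.pair v (S.α j)
  | none => fun v => -(S.pair v S.θ)

/-- The class in `P_cl` of the simple root `α_j`, `j ∈ I = I_0 ∪ {0}`
(for `j = 0` it is `α_0 = −θ`). -/
def aα : Option S.I0 → S.V
  | some j => S.α j
  | none => -S.θ

/-- `s_j := r_j` for `j ∈ I_0`, and `s_0 := r_θ ∈ W_0`. -/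
def saff : Option S.I0 → S.W
  | some j => S.cs.simple j
  | none => S.rroot S.θ

/-- For `j = 0`, the element `z ∈ W_J` with `r_θ w = ⌊r_θ w⌋ z`
(for `j ∈ I_0`, `z` is the identity). -/
noncomputable def zJof (J : Set S.I0) : Option S.I0 → S.W → S.W
  | some _ => fun _ => 1
  | none => fun w => (S.mcr J (S.rroot S.θ * w))⁻¹ * (S.rroot S.θ * w)

end QBGSetting

/-- A quantum Lakshmibai–Seshadri path of shape `λ` (Definition 3.5): a pair
`(x_1, …, x_s ; 0 = σ_0 < σ_1 < ⋯ < σ_s = 1)` of elements of `W_0^J` and of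
rational numbers, admitting a directed `σ_k`-path from `x_{k+1}` to `x_k` for
each `1 ≤ k ≤ s − 1`.  The set of these is `B̃(λ)_cl`. -/
structure QLSData (S : QBGSetting) where
  s : ℕ
  hs : 1 ≤ s
  x : ℕ → S.W
  σ : ℕ → ℚ
  x_mem : ∀ k, 1 ≤ k → k ≤ s → x k ∈ S.W0J S.JΛ
  x_ne : ∀ k, 1 ≤ k → k ≤ s - 1 → x k ≠ x (k+1)
  σ0 : σ 0 = 0
  σs : σ s = 1
  σ_mono : ∀ k < s, σ k < σ (k+1)
  chain : ∀ k, 1 ≤ k → k ≤ s - 1 →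
    ∃ (n : ℕ) (w : ℕ → S.W) (β : ℕ → S.V),
      S.IsDSPath S.JΛ (σ k : ℝ) n w β (x k) (x (k+1))

/-- The quantum LS path `η` is in `B̂(λ)_cl`: for each `k` there is a directed
`σ_k`-path from `x_{k+1}` to `x_k` of length `ℓ(x_k ⇐ x_{k+1})`. -/
def QLSData.IsShortest {S : QBGSetting} (d : QLSData S) : Prop :=
  ∀ k, 1 ≤ k → k ≤ d.s - 1 →
    ∃ (w : ℕ → S.W) (β : ℕ → S.V),
      S.IsDSPath S.JΛ (d.σ k : ℝ) (S.lenQ S.JΛ (d.x k) (d.x (k+1))) w β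
        (d.x k) (d.x (k+1))

/-- The piecewise-linear map `[0,1] → V` associated with a quantum LS path:
`η(t) = ∑_{l=1}^{k-1} (σ_l − σ_{l-1}) x_l Λ + (t − σ_{k-1}) x_k Λ` on
`[σ_{k-1}, σ_k]`. -/
noncomputable def QLSData.path {S : QBGSetting} (d : QLSData S) :
    UnitItv → S.V := fun t =>
  ∑ l ∈ Finset.Icc 1 d.s,
    (min (t : ℝ) (d.σ l : ℝ) - min (t : ℝ) (d.σ (l-1) : ℝ)) •
      (S.rep (d.x l) S.Λ)

/-- The set `B̃(λ)_cl` of quantum LS paths of shape `λ`, regarded as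
piecewise-linear maps. -/
def Btil (S : QBGSetting) : Set (UnitItv → S.V) :=
  {η | ∃ d : QLSData S, η = d.path}

/-- The set `B̂(λ)_cl ⊆ B̃(λ)_cl`, regarded as piecewise-linear maps. -/
def Bhat (S : QBGSetting) : Set (UnitItv → S.V) :=
  {η | ∃ d : QLSData S, d.IsShortest ∧ η = d.path}

/-!
Write `⌊w r_β⌋ = w r_β u` with `u ∈ W_J`. Lengths add on `⌊w r_β⌋ W_J`, so
`ℓ(w r_β) = ℓ(w) + 1 + ℓ(u)` and `r_β` is a right inversion of `w r_β`. By the strong exchange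
condition, a word for `w` arises by deleting one letter from a reduced word for `⌊w r_β⌋`
followed by a reduced word for `u⁻¹`. Deleting in the second part would give
`w ∈ ⌊w r_β⌋ W_J`, impossible as `w` is shorter than the minimal representative `⌊w r_β⌋`;
deleting in the first part gives `ℓ(w u) ≤ ℓ(w)`, which forces `u = 1` because lengths also add
on `w W_J`.

Strong exchange comes from Tits' sign cocycle: `s_i` acts on `W × {±1}` by
`(t, ε) ↦ (s_i t s_i, ±ε)`, flipping the sign exactly when `t = s_i`. This respects the Coxeter
relations, so the parity of the number of occurrences of `t` in the right inversion sequence of a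
word depends only on the element the word represents.
-/

namespace CoxeterSystem

variable {B W : Type*} [Group W] {M : CoxeterMatrix B} (cs : CoxeterSystem M W)
local prefix:100 "s" => cs.simple
local prefix:100 "π" => cs.wordProd
local prefix:100 "ℓ" => cs.length
local prefix:100 "ris " => cs.rightInvSeq

def signedConj (i : B) : Equiv.Perm (W × ℤˣ) :=
  Function.Involutive.toPerm (fun p => (s i * p.1 * s i, if p.1 = s i then -p.2 else p.2)) <| by
    rintro ⟨t, ε⟩
    by_cases h : t = s i
    · simp [h]
    · have h' : s i * t * s i ≠ s i := fun h' => h <| by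
        simpa [mul_assoc] using congrArg (fun x => s i * x * s i) h'
      simp only [h, h', if_false, Prod.mk.injEq, and_true]
      simp [mul_assoc]

theorem signedConj_apply (i : B) (t : W) (ε : ℤˣ) :
    cs.signedConj i (t, ε) = (s i * t * s i, if t = s i then -ε else ε) := rfl

theorem prod_map_signedConj_apply (ω : List B) (t : W) (ε : ℤˣ) :
    (ω.map cs.signedConj).prod (t, ε) =
      (π ω * t * (π ω)⁻¹, (-1) ^ (ris ω).count t * ε) := by
  induction ω with
  | nil => simp
  | cons i ω ih =>
    have hfix : π ω * t * (π ω)⁻¹ = s i ↔ (π ω)⁻¹ * s i * π ω = t := by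
      constructor <;> intro h <;> rw [← h] <;> group
    rw [List.map_cons, List.prod_cons, Equiv.Perm.mul_apply, ih]
    simp only [signedConj_apply, rightInvSeq, List.count_cons, beq_iff_eq, hfix, wordProd_cons,
      mul_inv_rev, inv_simple]
    split_ifs <;> simp [pow_succ, mul_assoc]

theorem alternatingWord_two_mul_succ (i j : B) (m : ℕ) :
    alternatingWord i j (2 * (m + 1)) = i :: j :: alternatingWord i j (2 * m) := by
  rw [show 2 * (m + 1) = 2 * m + 1 + 1 by ring, alternatingWord_succ', alternatingWord_succ']
  simp

theorem rightInvSeq_alternatingWord_two_mul (i j : B) (m : ℕ) :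
    ris (alternatingWord i j (2 * m)) =
      (List.range (2 * m)).reverse.map fun k => (s j * s i) ^ k * s j := by
  induction m with
  | zero => simp [alternatingWord]
  | succ m ih =>
    have hπ : π (alternatingWord i j (2 * m)) = (s i * s j) ^ m := by
      simp [prod_alternatingWord_eq_mul_pow]
    rw [alternatingWord_two_mul_succ, rightInvSeq, rightInvSeq, ih, wordProd_cons, hπ,
      show 2 * (m + 1) = 2 * m + 1 + 1 by ring, List.range_succ, List.range_succ]
    simp only [List.reverse_append, List.reverse_cons, List.reverse_nil, List.nil_append,
      List.cons_append, List.map_cons]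
    have hinv : ((s i * s j) ^ m)⁻¹ = (s j * s i) ^ m := by
      rw [← inv_pow, mul_inv_rev, inv_simple, inv_simple]
    refine List.cons_eq_cons.mpr ⟨?_, List.cons_eq_cons.mpr ⟨?_, rfl⟩⟩
    · calc (s j * (s i * s j) ^ m)⁻¹ * s i * (s j * (s i * s j) ^ m)
          = (s j * s i) ^ m * (s j * s i) * ((s j * s i) ^ m * s j) := by
            rw [mul_inv_rev, hinv, inv_simple, ← mul_pow_mul]; group
        _ = (s j * s i) ^ (2 * m + 1) * s j := by
            rw [← pow_succ, ← mul_assoc, ← pow_add]; ring_nf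
    · rw [hinv, mul_assoc, ← mul_pow_mul, ← mul_assoc, ← pow_add, two_mul]

theorem even_count_rightInvSeq_alternatingWord (i j : B) (t : W) :
    Even ((ris (alternatingWord i j (2 * M i j))).count t) := by
  have hperiod : ∀ k, (s j * s i) ^ (M i j + k) * s j = (s j * s i) ^ k * s j := by
    intro k
    rw [pow_add, simple_mul_simple_pow', one_mul]
  rw [rightInvSeq_alternatingWord_two_mul, List.map_reverse, List.count_reverse, two_mul,
    List.range_add, List.map_append, List.count_append, List.map_map]
  simp only [Function.comp_def, hperiod]
  exact ⟨_, rfl⟩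

theorem isLiftable_signedConj : M.IsLiftable cs.signedConj := by
  intro i j
  have hpow : ∀ m, (cs.signedConj i * cs.signedConj j) ^ m =
      ((alternatingWord i j (2 * m)).map cs.signedConj).prod := by
    intro m
    induction m with
    | zero => simp [alternatingWord]
    | succ m ih => rw [pow_succ', ih, alternatingWord_two_mul_succ]; simp [mul_assoc]
  ext ⟨t, ε⟩ : 1
  obtain ⟨c, hc⟩ := cs.even_count_rightInvSeq_alternatingWord i j t
  rw [hpow, prod_map_signedConj_apply, prod_alternatingWord_eq_mul_pow, hc, ← two_mul, pow_mul]
  simp [simple_mul_simple_pow]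

def signHom : W →* Equiv.Perm (W × ℤˣ) :=
  cs.lift ⟨cs.signedConj, cs.isLiftable_signedConj⟩

theorem signHom_wordProd_apply (ω : List B) (t : W) (ε : ℤˣ) :
    cs.signHom (π ω) (t, ε) = (π ω * t * (π ω)⁻¹, (-1) ^ (ris ω).count t * ε) := by
  rw [← prod_map_signedConj_apply, wordProd, map_list_prod, List.map_map]
  congr 3
  funext i
  exact cs.lift_apply_simple _ i

def inversionSign (w t : W) : ℤˣ := (cs.signHom w (t, 1)).2

theorem inversionSign_wordProd (ω : List B) (t : W) :
    cs.inversionSign (π ω) t = (-1) ^ (ris ω).count t := by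
  simp [inversionSign, signHom_wordProd_apply]

theorem signHom_apply (w t : W) (ε : ℤˣ) :
    cs.signHom w (t, ε) = (w * t * w⁻¹, cs.inversionSign w t * ε) := by
  obtain ⟨ω, -, rfl⟩ := cs.exists_isReduced w
  rw [signHom_wordProd_apply, inversionSign_wordProd]

theorem inversionSign_self {t : W} (ht : cs.IsReflection t) : cs.inversionSign t t = -1 := by
  obtain ⟨v, i, rfl⟩ := ht
  have hsimple : ∀ ε, cs.signHom (s i) (s i, ε) = (s i, -ε) := fun ε => by
    rw [signHom, lift_apply_simple, signedConj_apply]; simp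
  have hconj : cs.signHom (v * s i * v⁻¹) * cs.signHom v = cs.signHom v * cs.signHom (s i) := by
    rw [← map_mul, ← map_mul, inv_mul_cancel_right]
  set ε := (cs.inversionSign v (s i))⁻¹
  have key := congrArg (· (s i, ε)) hconj
  simp only [Equiv.Perm.mul_apply, hsimple, signHom_apply cs v, mul_neg, ε, mul_inv_cancel] at key
  rw [inversionSign, key]

theorem inversionSign_mul_reflection {t : W} (ht : cs.IsReflection t) (w : W) :
    cs.inversionSign (w * t) t = -cs.inversionSign w t := by
  have hself : cs.signHom t (t, 1) = (t, -1) := by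
    rw [signHom_apply, inversionSign_self cs ht, ht.inv, ht.mul_self, one_mul, mul_one]
  rw [inversionSign, map_mul, Equiv.Perm.mul_apply, hself, signHom_apply, mul_neg_one]

theorem mem_rightInvSeq_of_inversionSign_eq_neg_one {ω : List B} {t : W}
    (h : cs.inversionSign (π ω) t = -1) : t ∈ ris ω := by
  by_contra hmem
  rw [inversionSign_wordProd, List.count_eq_zero_of_not_mem hmem, pow_zero] at h
  exact absurd h (by decide)

theorem inversionSign_eq_neg_one_of_length_mul_lt {w t : W} (ht : cs.IsReflection t)
    (h : ℓ (w * t) < ℓ w) : cs.inversionSign w t = -1 := by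
  refine (Int.units_eq_one_or _).resolve_left fun h1 => ?_
  obtain ⟨ω, hω, hwt⟩ := cs.exists_isReduced (w * t)
  have hmem : t ∈ ris ω := cs.mem_rightInvSeq_of_inversionSign_eq_neg_one <| by
    rw [← hwt, inversionSign_mul_reflection cs ht, h1]
  have hlt := (cs.isRightInversion_of_mem_rightInvSeq hω hmem).2
  rw [← hwt, mul_assoc, ht.mul_self, mul_one] at hlt
  omega

theorem exists_eraseIdx_of_length_mul_lt (ω : List B) {t : W} (ht : cs.IsReflection t)
    (h : ℓ (π ω * t) < ℓ (π ω)) : ∃ k < ω.length, π ω * t = π (ω.eraseIdx k) := by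
  have hmem := cs.mem_rightInvSeq_of_inversionSign_eq_neg_one
    (cs.inversionSign_eq_neg_one_of_length_mul_lt ht h)
  obtain ⟨k, hk, rfl⟩ := List.mem_iff_getElem.mp hmem
  refine ⟨k, by simpa using hk, ?_⟩
  rw [← wordProd_mul_getD_rightInvSeq, List.getD_eq_getElem]

theorem length_mul_conj_lt_or_length_mul_lt {x y t : W} (ht : cs.IsReflection t)
    (hxy : ℓ (x * y) = ℓ x + ℓ y) (h : ℓ (x * y * t) < ℓ (x * y)) :
    ℓ (x * (y * t * y⁻¹)) < ℓ x ∨ ℓ (y * t) < ℓ y := by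
  obtain ⟨ωx, hωx, rfl⟩ := cs.exists_isReduced x
  obtain ⟨ωy, hωy, rfl⟩ := cs.exists_isReduced y
  rw [← wordProd_append] at h
  obtain ⟨k, hk, hkt⟩ := cs.exists_eraseIdx_of_length_mul_lt _ ht h
  rw [wordProd_append] at hkt
  by_cases hkx : k < ωx.length
  · left
    rw [List.eraseIdx_append_of_lt_length hkx, wordProd_append] at hkt
    have : π ωx * (π ωy * t * (π ωy)⁻¹) = π (ωx.eraseIdx k) := by
      rw [← mul_assoc, ← mul_assoc, hkt, mul_inv_cancel_right]
    rw [this, hωx]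
    exact (cs.length_wordProd_le _).trans_lt (by rw [List.length_eraseIdx_of_lt hkx]; omega)
  · right
    rw [List.eraseIdx_append_of_length_le (not_lt.mp hkx), wordProd_append, mul_assoc,
      mul_right_inj] at hkt
    rw [hkt, hωy]
    refine (cs.length_wordProd_le _).trans_lt ?_
    rw [List.length_append] at hk
    rw [List.length_eraseIdx_of_lt (by omega)]
    omega

def parabolicSubgroup (J : Set B) : Subgroup W := Subgroup.closure (cs.simple '' J)

def IsMinimalCosetRep (J : Set B) (w : W) : Prop :=
  ∀ u ∈ cs.parabolicSubgroup J, ℓ w ≤ ℓ (w * u)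

variable {cs} {J : Set B}

theorem wordProd_mem_parabolicSubgroup {ω : List B} (hω : ∀ i ∈ ω, i ∈ J) :
    π ω ∈ cs.parabolicSubgroup J := by
  induction ω with
  | nil => exact one_mem _
  | cons i ω ih =>
    rw [wordProd_cons]
    exact mul_mem (Subgroup.subset_closure ⟨i, hω i List.mem_cons_self, rfl⟩)
      (ih fun j hj => hω j (List.mem_cons_of_mem i hj))

theorem exists_wordProd_eq_of_mem_parabolicSubgroup {u : W} (hu : u ∈ cs.parabolicSubgroup J) :
    ∃ ω : List B, (∀ i ∈ ω, i ∈ J) ∧ π ω = u := by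
  induction hu using Subgroup.closure_induction with
  | mem x hx =>
    obtain ⟨i, hi, rfl⟩ := hx
    exact ⟨[i], by simpa using hi, wordProd_singleton cs i⟩
  | one => exact ⟨[], by simp, wordProd_nil cs⟩
  | mul x y _ _ hx hy =>
    obtain ⟨ωx, hωx, rfl⟩ := hx
    obtain ⟨ωy, hωy, rfl⟩ := hy
    exact ⟨ωx ++ ωy, fun i hi => (List.mem_append.mp hi).elim (hωx i) (hωy i),
      wordProd_append cs ωx ωy⟩
  | inv x _ hx =>
    obtain ⟨ω, hω, rfl⟩ := hx
    exact ⟨ω.reverse, fun i hi => hω i (List.mem_reverse.mp hi), wordProd_reverse cs ω⟩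

theorem mul_mem_parabolicSubgroup_of_length_mul_lt {u t : W} (hu : u ∈ cs.parabolicSubgroup J)
    (ht : cs.IsReflection t) (h : ℓ (u * t) < ℓ u) : u * t ∈ cs.parabolicSubgroup J := by
  obtain ⟨ω, hω, rfl⟩ := exists_wordProd_eq_of_mem_parabolicSubgroup hu
  obtain ⟨k, -, hk⟩ := cs.exists_eraseIdx_of_length_mul_lt ω ht h
  rw [hk]
  exact wordProd_mem_parabolicSubgroup fun i hi => hω i (List.mem_of_mem_eraseIdx hi)

variable (cs) in
theorem exists_isMinimalCosetRep (J : Set B) (g : W) :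
    ∃ u ∈ cs.parabolicSubgroup J, cs.IsMinimalCosetRep J (g * u) := by
  obtain ⟨u, hu, hmin⟩ := (measure fun u => ℓ (g * u)).wf.has_min
    (cs.parabolicSubgroup J : Set W) ⟨1, one_mem _⟩
  refine ⟨u, hu, fun v hv => ?_⟩
  rw [mul_assoc]
  exact not_lt.mp (hmin (u * v) (mul_mem hu hv))

theorem IsMinimalCosetRep.length_mul {w u : W} (hw : cs.IsMinimalCosetRep J w)
    (hu : u ∈ cs.parabolicSubgroup J) : ℓ (w * u) = ℓ w + ℓ u := by
  induction hlen : ℓ u using Nat.strong_induction_on generalizing u with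
  | _ n ih =>
    obtain rfl | hu1 := eq_or_ne u 1
    · simp [← hlen]
    obtain ⟨i, hi⟩ := cs.exists_rightDescent_of_ne_one hu1
    have hv : u * s i ∈ cs.parabolicSubgroup J :=
      mul_mem_parabolicSubgroup_of_length_mul_lt hu (cs.isReflection_simple i) hi
    have hlv : ℓ (u * s i) + 1 = ℓ u :=
      (cs.length_mul_simple u i).resolve_left (hi.trans (Nat.lt_succ_self _)).ne
    have ihv := ih _ (by omega) hv rfl
    rcases cs.length_mul_simple (w * (u * s i)) i with hup | hdown
    · rw [mul_assoc, mul_assoc, simple_mul_simple_self, mul_one] at hup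
      omega
    · exfalso
      rcases cs.length_mul_conj_lt_or_length_mul_lt (cs.isReflection_simple i) ihv (by omega)
        with hconj | hdesc
      · have hmem : u * s i * s i * (u * s i)⁻¹ ∈ cs.parabolicSubgroup J := by
          rw [mul_assoc u, simple_mul_simple_self, mul_one]
          exact mul_mem hu (inv_mem hv)
        exact absurd (hw _ hmem) (not_le.mpr hconj)
      · rw [mul_assoc, simple_mul_simple_self, mul_one] at hdesc
        omega

theorem IsMinimalCosetRep.eq_one_of_length_mul_reflection_mul {w t u : W}
    (hw : cs.IsMinimalCosetRep J w) (ht : cs.IsReflection t) (hu : u ∈ cs.parabolicSubgroup J)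
    (hm : cs.IsMinimalCosetRep J (w * t * u)) (hlen : ℓ (w * t * u) = ℓ w + 1) : u = 1 := by
  set m := w * t * u
  have hwt : m * u⁻¹ = w * t := by simp [m]
  have hadd : ℓ (m * u⁻¹) = ℓ m + ℓ u⁻¹ := hm.length_mul (inv_mem hu)
  have hdesc : ℓ (m * u⁻¹ * t) < ℓ (m * u⁻¹) := by
    have hle := hm _ (inv_mem hu)
    rw [hwt] at hle ⊢
    rw [mul_assoc, ht.mul_self, mul_one]
    omega
  rcases cs.length_mul_conj_lt_or_length_mul_lt ht hadd hdesc with hlt | hlt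
  · have hwu : m * (u⁻¹ * t * u⁻¹⁻¹) = w * u := by
      simp only [m, inv_inv, mul_assoc, mul_inv_cancel_left, ← mul_assoc t t, ht.mul_self,
        one_mul]
    rw [hwu, hw.length_mul hu] at hlt
    exact cs.length_eq_zero_iff.mp (by omega)
  · have hle := hm _ (mul_mem_parabolicSubgroup_of_length_mul_lt (inv_mem hu) ht hlt)
    rw [← mul_assoc, hwt, mul_assoc, ht.mul_self, mul_one] at hle
    omega

end CoxeterSystem

namespace QBGSetting

variable (S : QBGSetting)

theorem isReflection_rroot {β : S.V} (hβ : β ∈ S.roots) : S.cs.IsReflection (S.rroot β) := by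
  rw [S.roots_def] at hβ
  obtain ⟨v, j, rfl⟩ := hβ
  exact ⟨v, j, by rw [S.rroot_conj v _ (S.pos_sub (S.α_pos j)), S.rroot_simple]⟩

theorem mcr_spec (J : Set S.I0) (g : S.W) :
    (∃ u ∈ S.WJ J, S.mcr J g = g * u) ∧ S.mcr J g ∈ S.W0J J := by
  obtain ⟨u, hu, hmin⟩ := S.cs.exists_isMinimalCosetRep J g
  have hex : ∃ x, (∃ u ∈ S.WJ J, x = g * u) ∧ x ∈ S.W0J J := ⟨g * u, ⟨u, hu, rfl⟩, hmin⟩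
  exact Classical.epsilon_spec hex

end QBGSetting

theorem length_add_one_mem_W0J_general (S : QBGSetting) (J : Set S.I0) (w : S.W)
    (hw : w ∈ S.W0J J) (β : S.V) (hβpos : β ∈ S.pos)
    (hlen : S.cs.length (S.mcr J (w * S.rroot β)) = S.cs.length w + 1) :
    w * S.rroot β ∈ S.W0J J ∧ S.mcr J (w * S.rroot β) = w * S.rroot β := by
  obtain ⟨⟨u, hu, hmcr⟩, hmin⟩ := S.mcr_spec J (w * S.rroot β)
  rw [hmcr] at hlen hmin
  obtain rfl : u = 1 := CoxeterSystem.IsMinimalCosetRep.eq_one_of_length_mul_reflection_mul hw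
    (S.isReflection_rroot (S.pos_sub hβpos)) hu hmin hlen
  rw [mul_one] at hmcr hmin
  exact ⟨hmin, hmcr⟩

/-- Remark 3.2. Fix `J ⊆ I_0`. If `w ∈ W_0^J` and
`β ∈ Δ_0^+ ∖ Δ_J^+` satisfy `ℓ(⌊w r_β⌋) = ℓ(w) + 1`, then `w r_β ∈ W_0^J`
(so that `⌊w r_β⌋ = w r_β`). -/
theorem length_add_one_mem_W0J (S : QBGSetting) (J : Set S.I0) (w : S.W)
    (hw : w ∈ S.W0J J) (β : S.V) (hβpos : β ∈ S.pos) (hβJ : β ∉ S.ZJ J)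
    (hlen : S.cs.length (S.mcr J (w * S.rroot β)) = S.cs.length w + 1) :
    w * S.rroot β ∈ S.W0J J ∧ S.mcr J (w * S.rroot β) = w * S.rroot β :=
  length_add_one_mem_W0J_general S J w hw β hβpos hlen
end
end

section
/- Let x, y ∈ W_0^J and let σ ∈ ℚ with 0 < σ < 1. If there exists a directed σ-path from y to x in the parabolic quantum Bruhat graph, then σ(xΛ − yΛ) is contained in Q_0 = ⊕_{j∈I_0} ℤα_j. -/
noncomputable section

open Classical

/-! Since `W_J` fixes `Λ`, along an edge `⌊w r_β⌋ ←β— w` we get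
`⌊w r_β⌋Λ = w r_β Λ = wΛ − ⟨Λ, β^∨⟩ wβ`. For a `σ`-path, `σ` times this difference is an
integer multiple of the root `wβ`, hence lies in `Q_0`, and the differences telescope
along the path. -/

theorem AddSubgroup.sub_mem_of_forall_sub_succ_mem {G : Type*} [AddCommGroup G]
    (H : AddSubgroup G) (f : ℕ → G) (n : ℕ) (h : ∀ k < n, f k - f (k + 1) ∈ H) :
    f 0 - f n ∈ H := by
  induction n with
  | zero => simp
  | succ n ih =>
    rw [← sub_add_sub_cancel _ (f n)]
    exact add_mem (ih fun k hk => h k (by omega)) (h n (by omega))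

namespace QBGSetting

variable (S : QBGSetting)

@[simp]
lemma rep_mul_apply (a b : S.W) (v : S.V) : S.rep (a * b) v = S.rep a (S.rep b v) := by
  rw [map_mul, LinearEquiv.mul_apply]

lemma rep_apply_Λ_of_mem_WJ {u : S.W} (hu : u ∈ S.WJ S.JΛ) : S.rep u S.Λ = S.Λ := by
  induction hu using Subgroup.closure_induction with
  | mem _ hs =>
    obtain ⟨j, hj, rfl⟩ := hs
    rw [S.simple_apply, show S.pair S.Λ (S.α j) = 0 from hj, zero_smul, sub_zero]
  | one => simp
  | mul a b _ _ ha hb => rw [rep_mul_apply, hb, ha]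
  | inv a _ ha => simpa using (congrArg (S.rep a⁻¹) ha).symm

lemma exists_mcr_eq_mul (J : Set S.I0) (w : S.W) : ∃ u ∈ S.WJ J, S.mcr J w = w * u := by
  suffices ∃ x, (∃ u ∈ S.WJ J, x = w * u) ∧ x ∈ S.W0J J from (Classical.epsilon_spec this).1
  -- a coset element of minimal length
  obtain ⟨u₀, hu₀, hmin⟩ := Nat.sInf_mem (s := {n | ∃ u ∈ S.WJ J, S.cs.length (w * u) = n})
    ⟨_, 1, one_mem _, rfl⟩
  refine ⟨w * u₀, ⟨u₀, hu₀, rfl⟩, fun u hu => hmin ▸ Nat.sInf_le ⟨u₀ * u, mul_mem hu₀ hu, ?_⟩⟩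
  rw [mul_assoc]

lemma rep_mcr_apply_Λ (w : S.W) : S.rep (S.mcr S.JΛ w) S.Λ = S.rep w S.Λ := by
  obtain ⟨u, hu, h⟩ := S.exists_mcr_eq_mul S.JΛ w
  rw [h, rep_mul_apply, S.rep_apply_Λ_of_mem_WJ hu]

lemma rep_mem_roots (w : S.W) {v : S.V} (hv : v ∈ S.roots) : S.rep w v ∈ S.roots := by
  rw [S.roots_def] at hv ⊢
  obtain ⟨u, j, rfl⟩ := hv
  exact ⟨w * u, j, rep_mul_apply ..⟩

lemma α_mem_Q0 (j : S.I0) : S.α j ∈ S.Q0 :=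
  AddSubgroup.subset_closure (Set.mem_range_self j)

lemma rep_mem_Q0_of_mem_roots (w : S.W) {v : S.V} (hv : v ∈ S.roots) (hvQ : v ∈ S.Q0) :
    S.rep w v ∈ S.Q0 := by
  obtain ⟨ω, rfl⟩ := S.cs.wordProd_surjective w
  induction ω with
  | nil => simpa using hvQ
  | cons i ω ih =>
    rw [S.cs.wordProd_cons, rep_mul_apply, S.simple_apply]
    obtain ⟨m, hm⟩ := S.pair_cryst _ (S.rep_mem_roots _ hv) _ (S.pos_sub (S.α_pos i))
    rw [hm, Int.cast_smul_eq_zsmul]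
    exact sub_mem ih (zsmul_mem (S.α_mem_Q0 i) m)

lemma roots_subset_Q0 : S.roots ⊆ S.Q0 := by
  intro v hv
  rw [S.roots_def] at hv
  obtain ⟨u, j, rfl⟩ := hv
  exact S.rep_mem_Q0_of_mem_roots u (S.pos_sub (S.α_pos j)) (S.α_mem_Q0 j)

lemma rep_apply_Λ_of_hasEdge {w' w : S.W} {β : S.V} (h : S.hasEdge S.JΛ w' w β) :
    S.rep w' S.Λ = S.rep w S.Λ - S.pair S.Λ β • S.rep w β := by
  obtain ⟨⟨-, hβ, -⟩, rfl⟩ := h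
  rw [rep_mcr_apply_Λ, rep_mul_apply, S.rroot_apply β (S.pos_sub hβ), map_sub, map_smul]

lemma smul_rep_Λ_sub_mem_Q0_of_hasEdge {w' w : S.W} {β : S.V} (h : S.hasEdge S.JΛ w' w β)
    {σ : ℝ} {m : ℤ} (hm : σ * S.pair S.Λ β = m) :
    σ • (S.rep w' S.Λ - S.rep w S.Λ) ∈ S.Q0 := by
  rw [S.rep_apply_Λ_of_hasEdge h, sub_sub_cancel_left, smul_neg, smul_smul, hm,
    Int.cast_smul_eq_zsmul]
  exact neg_mem (zsmul_mem (S.roots_subset_Q0 (S.rep_mem_roots _ (S.pos_sub h.1.2.1))) m)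

end QBGSetting

theorem sigma_path_weight_diff_general (S : QBGSetting) (x y : S.W)
    (σ : ℚ)
    (hpath : ∃ (n : ℕ) (w : ℕ → S.W) (β : ℕ → S.V),
      S.IsDSPath S.JΛ (σ : ℝ) n w β x y) :
    (σ : ℝ) • (S.rep x S.Λ - S.rep y S.Λ) ∈ S.Q0 := by
  obtain ⟨n, w, β, ⟨rfl, rfl, hedge⟩, hint⟩ := hpath
  simp_rw [smul_sub]
  refine S.Q0.sub_mem_of_forall_sub_succ_mem (fun k => (σ : ℝ) • S.rep (w k) S.Λ) n
    fun k hk => ?_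
  obtain ⟨m, hm⟩ := hint k hk
  rw [← smul_sub]
  exact S.smul_rep_Λ_sub_mem_Q0_of_hasEdge (hedge k hk) hm

/-- Lemma 4.5. Let `x, y ∈ W_0^J` and `σ ∈ ℚ` with
`0 < σ < 1`.  If there is a directed `σ`-path from `y` to `x` in the
parabolic quantum Bruhat graph, then `σ (xΛ − yΛ) ∈ Q_0 = ⊕_{j ∈ I_0} ℤ α_j`. -/
theorem sigma_path_weight_diff (S : QBGSetting) (x y : S.W)
    (hx : x ∈ S.W0J S.JΛ) (hy : y ∈ S.W0J S.JΛ)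
    (σ : ℚ) (h0 : 0 < σ) (h1 : σ < 1)
    (hpath : ∃ (n : ℕ) (w : ℕ → S.W) (β : ℕ → S.V),
      S.IsDSPath S.JΛ (σ : ℝ) n w β x y) :
    (σ : ℝ) • (S.rep x S.Λ - S.rep y S.Λ) ∈ S.Q0 :=
  sigma_path_weight_diff_general S x y σ hpath
end
end
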